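/- For λ > 1 and x ∈ [arccos(1/λ), π/2], the two solutions φ₊, φ₋ of x(φ, λ) = x satisfy sin φ₊ = λ cos² x + sin x √(1 - λ² cos² x) and sin φ₋ = λ cos² x - sin x √(1 - λ² cos² x); moreover, with ζ = arcsin(√(1 - λ² cos² x)), one has π/2 - φ₊ = x - ζ and π/2 - φ₋ = x + ζ, and cos φ₊/cos x = λ sin x - sin ζ, cos φ₋/cos x = λ sin x + sin ζ. -/
import Mathlib


open Real

noncomputable def xFun (φ lam : ℝ) : ℝ :=
  Real.arcsin ((lam - Real.sin φ) / Real.sqrt (lam^2 - 2 * lam * Real.sin φ + 1))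

noncomputable def zeta (x lam : ℝ) : ℝ :=
  Real.arcsin (Real.sqrt (1 - lam^2 * Real.cos x ^ 2))

theorem stmt_5 (lam x : ℝ) (hlam : 1 < lam)
    (hx : x ∈ Set.Icc (Real.arccos (1/lam)) (π/2)) :
    let ζ := zeta x lam
    let φp := π/2 - (x - ζ)
    let φm := π/2 - (x + ζ)
    xFun φp lam = x ∧ xFun φm lam = x ∧
    Real.sin φp = lam * Real.cos x ^ 2 + Real.sin x * Real.sqrt (1 - lam^2 * Real.cos x ^ 2) ∧
    Real.sin φm = lam * Real.cos x ^ 2 - Real.sin x * Real.sqrt (1 - lam^2 * Real.cos x ^ 2) ∧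
    π/2 - φp = x - ζ ∧ π/2 - φm = x + ζ ∧
    Real.cos φp = (lam * Real.sin x - Real.sin ζ) * Real.cos x ∧
    Real.cos φm = (lam * Real.sin x + Real.sin ζ) * Real.cos x := by
  obtain ⟨hx1, hx2⟩ := hx
  have hpi := Real.pi_pos
  have hlam0 : (0:ℝ) < lam := by linarith
  have h1lam : 1/lam ≤ 1 := by rw [div_le_one hlam0]; linarith
  have h1lam' : (0:ℝ) ≤ 1/lam := by positivity
  have hx0 : 0 ≤ x := le_trans (Real.arccos_nonneg _) hx1
  have hc0 : 0 ≤ Real.cos x := Real.cos_nonneg_of_mem_Icc ⟨by linarith, hx2⟩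
  have hs0 : 0 ≤ Real.sin x := Real.sin_nonneg_of_nonneg_of_le_pi hx0 (by linarith)
  set s := Real.sin x with hs
  set c := Real.cos x with hc
  have pyth : s^2 + c^2 = 1 := Real.sin_sq_add_cos_sq x
  have hcle : c ≤ 1/lam := by
    calc c ≤ Real.cos (Real.arccos (1/lam)) :=
          Real.cos_le_cos_of_nonneg_of_le_pi (Real.arccos_nonneg _) (by linarith) hx1
      _ = 1/lam := Real.cos_arccos (by linarith) h1lam
  have hlc1 : lam * c ≤ 1 := by
    rw [le_div_iff₀ hlam0] at hcle; linarith [hcle]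
  have hlc0 : 0 ≤ lam * c := mul_nonneg hlam0.le hc0
  have h1 : 0 ≤ 1 - lam^2 * c^2 := by nlinarith
  set u := Real.sqrt (1 - lam^2 * c^2) with hu
  have hu0 : 0 ≤ u := Real.sqrt_nonneg _
  have hu2 : u^2 = 1 - lam^2 * c^2 := Real.sq_sqrt h1
  have hu1 : u ≤ 1 := by nlinarith
  intro ζ φp φm
  have hζ : ζ = Real.arcsin u := rfl
  have sinζ : Real.sin ζ = u := by
    rw [hζ, Real.sin_arcsin (by linarith) hu1]
  have cosζ : Real.cos ζ = lam * c := by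
    rw [hζ, Real.cos_arcsin]
    rw [show 1 - u^2 = (lam*c)^2 by nlinarith]
    exact Real.sqrt_sq hlc0
  have hA : u < lam * s := by
    have hls : 0 ≤ lam * s := mul_nonneg hlam0.le hs0
    nlinarith [sq_nonneg (lam*s - u), sq_nonneg (lam*s + u)]
  have sinφp : Real.sin φp = lam * c^2 + s * u := by
    show Real.sin (π/2 - (x - ζ)) = _
    rw [Real.sin_pi_div_two_sub, Real.cos_sub, cosζ, sinζ]; ring
  have sinφm : Real.sin φm = lam * c^2 - s * u := by
    show Real.sin (π/2 - (x + ζ)) = _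
    rw [Real.sin_pi_div_two_sub, Real.cos_add, cosζ, sinζ]; ring
  have cosφp : Real.cos φp = (lam * s - u) * c := by
    show Real.cos (π/2 - (x - ζ)) = _
    rw [Real.cos_pi_div_two_sub, Real.sin_sub, cosζ, sinζ]; ring
  have cosφm : Real.cos φm = (lam * s + u) * c := by
    show Real.cos (π/2 - (x + ζ)) = _
    rw [Real.cos_pi_div_two_sub, Real.sin_add, cosζ, sinζ]; ring
  have hxp : xFun φp lam = x := by
    rw [xFun, sinφp]
    rw [show lam^2 - 2*lam*(lam*c^2 + s*u) + 1 = (lam*s - u)^2 by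
      linear_combination (-lam^2) * pyth - hu2]
    rw [Real.sqrt_sq (by linarith)]
    rw [show lam - (lam*c^2 + s*u) = s * (lam*s - u) by linear_combination (-lam) * pyth]
    rw [mul_div_assoc, div_self (by linarith : lam*s - u ≠ 0), mul_one]
    exact Real.arcsin_sin (by linarith) hx2
  have hxm : xFun φm lam = x := by
    rw [xFun, sinφm]
    rw [show lam^2 - 2*lam*(lam*c^2 - s*u) + 1 = (lam*s + u)^2 by
      linear_combination (-lam^2) * pyth - hu2]
    rw [Real.sqrt_sq (by linarith)]
    rw [show lam - (lam*c^2 - s*u) = s * (lam*s + u) by linear_combination (-lam) * pyth]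
    rw [mul_div_assoc, div_self (by linarith : lam*s + u ≠ 0), mul_one]
    exact Real.arcsin_sin (by linarith) hx2
  refine ⟨hxp, hxm, ?_, ?_, by ring, by ring, ?_, ?_⟩
  · rw [sinφp]
  · rw [sinφm]
  · rw [cosφp, sinζ]
  · rw [cosφm, sinζ]
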